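/- Over the field 𝔽_7, let f(x) = x⁴ + x³ + 3x². Then f'(x) = 4x³ + 3x² + 6x, the set of critical values of f is R = {0, 1, 3}, and for the shifts (h₁, h₂, h₃, h₄) = (0, 1, 2, 4), every element of 𝔽_7 that lies in some translate h_i + R lies in exactly two such translates (counted with multiplicity in the multiset union of h₁+R, h₂+R, h₃+R, h₄+R). -/

import Mathlib

/-! Over `𝔽₇`, `f' = 4x(x - 2)(x - 6)`, so the critical points are `0, 2, 6`, with critical values
`f 0 = 0`, `f 2 = 1`, `f 6 = 3`. That each point of `⋃ (hᵢ + R)` is covered exactly twice is a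
finite check. -/

open Polynomial

theorem derivative_X_pow_four_add_X_pow_three_add_C_mul_X_sq {R : Type*} [CommSemiring R]
    (a : R) :
    derivative (X ^ 4 + X ^ 3 + C a * X ^ 2 : R[X]) =
      C 4 * X ^ 3 + C 3 * X ^ 2 + C (2 * a) * X := by
  simp only [derivative_add, derivative_X_pow, derivative_C_mul_X_pow, C_mul]
  norm_num
  ring

theorem degenerate_example_F7 :
    (derivative (X ^ 4 + X ^ 3 + C 3 * X ^ 2 : (ZMod 7)[X]) =
      C 4 * X ^ 3 + C 3 * X ^ 2 + C 6 * X) ∧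
    ({y : ZMod 7 | ∃ x : ZMod 7,
        (derivative (X ^ 4 + X ^ 3 + C 3 * X ^ 2 : (ZMod 7)[X])).eval x = 0 ∧
        (X ^ 4 + X ^ 3 + C 3 * X ^ 2 : (ZMod 7)[X]).eval x = y} = {0, 1, 3}) ∧
    (∀ z : ZMod 7,
      z ∈ (Finset.univ : Finset (Fin 4)).val.bind
          (fun i => (({0, 1, 3} : Finset (ZMod 7)).val.map
            (fun r => (![0, 1, 2, 4] : Fin 4 → ZMod 7) i + r))) →
      Multiset.count z
        ((Finset.univ : Finset (Fin 4)).val.bind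
          (fun i => (({0, 1, 3} : Finset (ZMod 7)).val.map
            (fun r => (![0, 1, 2, 4] : Fin 4 → ZMod 7) i + r)))) = 2) := by
  have hderiv := derivative_X_pow_four_add_X_pow_three_add_C_mul_X_sq (3 : ZMod 7)
  rw [show (2 * 3 : ZMod 7) = 6 by decide] at hderiv
  refine ⟨hderiv, ?_, by decide⟩
  ext y
  simp only [Set.mem_ofPred_eq, hderiv, eval_add, eval_mul, eval_pow, eval_X, eval_C,
    Set.mem_insert_iff, Set.mem_singleton_iff]
  revert y
  decide
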